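/- Let a, b ∈ ℝ with |a − b| ≤ 1 and set t₀ = a − b + 1 (so 0 ≤ t₀ ≤ 2). Define K = {(α,β) ∈ ℝ² : |β − α| ≤ 1}, f = (0,1) ∈ ℝ², and u : [0,∞) → ℝ² by u(t) = (a, b + t) for 0 ≤ t ≤ t₀ and u(t) = (a + (t−t₀)/2, b + t₀ + (t−t₀)/2) for t ≥ t₀. Then: (i) u(0) = (a,b); (ii) u is continuous on [0,∞); (iii) u(t) ∈ K for every t ≥ 0; (iv) for every t > 0 with t ≠ t₀, u is differentiable at t and ⟨f − u'(t), w − u(t)⟩ ≤ 0 for every w ∈ K, where ⟨·,·⟩ is the Euclidean inner product on ℝ². -/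

import Mathlib

open scoped RealInnerProductSpace

/-- The constraint set `K = {(α,β) ∈ ℝ² : |β - α| ≤ 1}`, viewed in `ℝ²` with the Euclidean
inner product. -/
noncomputable def sandpileK : Set (EuclideanSpace ℝ (Fin 2)) :=
  {w | |w 1 - w 0| ≤ 1}

/-- The source `f = (0,1)`. -/
noncomputable def sandpileF : EuclideanSpace ℝ (Fin 2) := !₂[0, 1]

/-- The explicit solution of Example 2 with initial data `(a,b)` and switching time
`t₀ = a - b + 1`: `u(t) = (a, b + t)` for `0 ≤ t ≤ t₀` and
`u(t) = (a + (t - t₀)/2, b + t₀ + (t - t₀)/2)` for `t ≥ t₀`. -/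
noncomputable def sandpileU (a b : ℝ) : ℝ → EuclideanSpace ℝ (Fin 2) := fun t =>
  if t ≤ a - b + 1 then !₂[a, b + t]
  else !₂[a + (t - (a - b + 1)) / 2, b + (a - b + 1) + (t - (a - b + 1)) / 2]

/-! Up to the switching time `t₀ = a - b + 1` the solution moves with the source, `u' = f`, so
`f - u'` vanishes. From `t₀` on, `u` slides along the edge `β - α = 1` of `K` with velocity
`(1/2, 1/2)`, and `f - u' = (-1/2, 1/2)` is an outward normal of `K` there:
`⟪f - u', w - u⟫ = ((w 1 - w 0) - 1) / 2 ≤ 0` for `w ∈ K`. -/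

lemma EuclideanSpace.inner_fin_two (x y : EuclideanSpace ℝ (Fin 2)) :
    ⟪x, y⟫ = x 0 * y 0 + x 1 * y 1 := by
  simp only [PiLp.inner_apply, Fin.sum_univ_two, RCLike.inner_apply, conj_trivial]
  ring

lemma EuclideanSpace.inner_antidiagonal (c : ℝ) (x : EuclideanSpace ℝ (Fin 2)) :
    ⟪!₂[-c, c], x⟫ = c * (x 1 - x 0) := by
  rw [EuclideanSpace.inner_fin_two]
  simp only [Matrix.cons_val_zero, Matrix.cons_val_one]
  ring

namespace SandpileExample

variable {a b t : ℝ}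

lemma sandpileU_eq_of_le (ht : t ≤ a - b + 1) :
    sandpileU a b t = !₂[a, b] + t • sandpileF := by
  ext i
  fin_cases i <;> simp [sandpileU, sandpileF, ht]

lemma sandpileU_eq_of_ge (ht : a - b + 1 ≤ t) :
    sandpileU a b t = !₂[a, b + (a - b + 1)] + (t - (a - b + 1)) • !₂[1/2, 1/2] := by
  rcases ht.eq_or_lt with rfl | ht
  · simp [sandpileU]
  · ext i
    fin_cases i <;> simp [sandpileU, not_le.mpr ht] <;> ring

lemma sandpileU_one_sub_zero (a b t : ℝ) :
    sandpileU a b t 1 - sandpileU a b t 0 = min (b - a + t) 1 := by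
  rcases le_total t (a - b + 1) with ht | ht
  · rw [sandpileU_eq_of_le ht, min_eq_left (by linarith)]
    simp [sandpileF, add_sub_right_comm]
  · rw [sandpileU_eq_of_ge ht, min_eq_right (by linarith)]
    simp only [PiLp.add_apply, PiLp.smul_apply, smul_eq_mul, Matrix.cons_val_zero,
      Matrix.cons_val_one, Matrix.cons_val_fin_one]
    ring

lemma continuous_sandpileU (a b : ℝ) : Continuous (sandpileU a b) := by
  have hpiece : sandpileU a b = fun t =>
      if t ≤ a - b + 1 then !₂[a, b] + t • sandpileF
      else !₂[a, b + (a - b + 1)] + (t - (a - b + 1)) • !₂[1/2, 1/2] := by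
    funext t
    split_ifs with ht
    · exact sandpileU_eq_of_le ht
    · exact sandpileU_eq_of_ge (not_le.mp ht).le
  rw [hpiece]
  refine Continuous.if_le (by fun_prop) (by fun_prop) continuous_id continuous_const ?_
  intro t ht
  rw [← sandpileU_eq_of_le ht.le, ← sandpileU_eq_of_ge ht.ge]

lemma sandpileU_mem_sandpileK (hab : -1 ≤ b - a) (ht : 0 ≤ t) :
    sandpileU a b t ∈ sandpileK := by
  change |sandpileU a b t 1 - sandpileU a b t 0| ≤ 1
  rw [sandpileU_one_sub_zero, abs_le]
  constructor
  · exact le_min (by linarith) (by norm_num)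
  · exact min_le_right _ _

lemma hasDerivAt_sandpileU_of_lt (ht : t < a - b + 1) :
    HasDerivAt (sandpileU a b) sandpileF t := by
  have hloc : (fun s => !₂[a, b] + s • sandpileF) =ᶠ[nhds t] sandpileU a b := by
    filter_upwards [Iio_mem_nhds ht] with s hs
    exact (sandpileU_eq_of_le (le_of_lt hs)).symm
  exact (((hasDerivAt_id t).smul_const sandpileF).const_add _).congr_of_eventuallyEq
    hloc.symm |>.congr_deriv (one_smul ℝ _)

lemma hasDerivAt_sandpileU_of_gt (ht : a - b + 1 < t) :
    HasDerivAt (sandpileU a b) !₂[1/2, 1/2] t := by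
  have hloc : (fun s => !₂[a, b + (a - b + 1)] + (s - (a - b + 1)) • !₂[1/2, 1/2])
      =ᶠ[nhds t] sandpileU a b := by
    filter_upwards [Ioi_mem_nhds ht] with s hs
    exact (sandpileU_eq_of_ge (le_of_lt hs)).symm
  exact ((((hasDerivAt_id t).sub_const _).smul_const _).const_add _).congr_of_eventuallyEq
    hloc.symm |>.congr_deriv (one_smul ℝ _)

lemma inner_sandpileF_sub_deriv_nonpos (ht : t ≠ a - b + 1) {w : EuclideanSpace ℝ (Fin 2)}
    (hw : w ∈ sandpileK) : ⟪sandpileF - deriv (sandpileU a b) t, w - sandpileU a b t⟫ ≤ 0 := by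
  rcases ht.lt_or_gt with ht | ht
  · rw [(hasDerivAt_sandpileU_of_lt ht).deriv, sub_self, inner_zero_left]
  · have hnormal : sandpileF - !₂[1/2, 1/2] = !₂[-(1/2 : ℝ), 1/2] := by
      ext i
      fin_cases i <;> norm_num [sandpileF]
    have hedge : sandpileU a b t 1 - sandpileU a b t 0 = 1 := by
      rw [sandpileU_one_sub_zero, min_eq_right (by linarith)]
    have hw' : w 1 - w 0 ≤ 1 := (abs_le.mp hw).2
    rw [(hasDerivAt_sandpileU_of_gt ht).deriv, hnormal, EuclideanSpace.inner_antidiagonal]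
    simp only [PiLp.sub_apply]
    linarith

end SandpileExample

open SandpileExample in
theorem statement8 (a b : ℝ) (hab : |a - b| ≤ 1) :
    (0 ≤ a - b + 1 ∧ a - b + 1 ≤ 2) ∧
    sandpileU a b 0 = ![a, b] ∧
    ContinuousOn (sandpileU a b) (Set.Ici (0 : ℝ)) ∧
    (∀ t : ℝ, 0 ≤ t → sandpileU a b t ∈ sandpileK) ∧
    (∀ t : ℝ, 0 < t → t ≠ a - b + 1 →
      DifferentiableAt ℝ (sandpileU a b) t ∧
      ∀ w ∈ sandpileK, ⟪sandpileF - deriv (sandpileU a b) t, w - sandpileU a b t⟫ ≤ 0) := by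
  obtain ⟨hlow, hhigh⟩ := abs_le.mp hab
  refine ⟨⟨by linarith, by linarith⟩, ?_, (continuous_sandpileU a b).continuousOn,
    fun t ht => sandpileU_mem_sandpileK (by linarith) ht, fun t _ ht => ⟨?_, fun w hw =>
      inner_sandpileF_sub_deriv_nonpos ht hw⟩⟩
  · simp [sandpileU, show (0 : ℝ) ≤ a - b + 1 by linarith]
  · rcases ht.lt_or_gt with ht | ht
    · exact (hasDerivAt_sandpileU_of_lt ht).differentiableAt
    · exact (hasDerivAt_sandpileU_of_gt ht).differentiableAt
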